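/- arXiv:1004.0244 — 2 statements merged into one kernel-verified Lean document; each statement's English description precedes it below -/
import Mathlib

section
/- Let n ≥ 1, let 0 < a_1 < ... < a_k < n, let d = gcd(n, a_1, ..., a_k), let G_s = ⟨a_1,...,a_{s-1}⟩ ⊆ Z_n, let L_1 be the order of a_1 in Z_n, and for 1 < s ≤ k let L_s = min{t ∈ ℕ, t > 0 : t·a_s ∈ G_s}. Then every x ∈ Z_n can be written uniquely as x = r + m_1·a_1 + ... + m_k·a_k in Z_n, where 0 ≤ r < d is the remainder of (a lift of) x modulo d and 0 ≤ m_s < L_s for all s. -/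
/-! Since `d` is an integer combination of `n` and the `a_i`, the element `x - (x mod d)` lies in
the subgroup generated by the `a_i`. An element `g + z • a_s` with `g ∈ G_s` can have `z` reduced
modulo `L_s`, because `L_s • a_s ∈ G_s`; induction on `s` gives existence. For uniqueness, look
at the last index `s` where two admissible coefficient vectors differ: their equal sums force
`|m_s - m'_s| • a_s ∈ G_s` with `0 < |m_s - m'_s| < L_s`, against the minimality of `L_s`. -/

open Finset AddSubgroup

section PrefixSpan

variable {G : Type*} [AddCommGroup G] {k : ℕ} (A : Fin k → G)

def prefixSpan (t : ℕ) : AddSubgroup G :=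
  closure (A '' {i | (i : ℕ) < t})

lemma prefixSpan_succ {t : ℕ} (ht : t < k) :
    prefixSpan A (t + 1) = prefixSpan A t ⊔ zmultiples (A (⟨t, ht⟩ : Fin k)) := by
  have : {i : Fin k | (i : ℕ) < t + 1} = insert (⟨t, ht⟩ : Fin k) {i : Fin k | (i : ℕ) < t} := by
    ext i
    simp only [Set.mem_ofPred_eq, Set.mem_insert_iff, Fin.ext_iff]
    omega
  rw [prefixSpan, this, Set.image_insert_eq, Set.insert_eq, AddSubgroup.closure_union, sup_comm,
    ← zmultiples_eq_closure, prefixSpan]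

lemma prefixSpan_self : prefixSpan A k = closure (Set.range A) := by
  simp [prefixSpan]

variable (L : Fin k → ℕ)

lemma exists_bounded_sum_nsmul_of_mem_prefixSpan
    (hL : ∀ s : Fin k, 0 < L s ∧ L s • A s ∈ prefixSpan A s) {t : ℕ} (ht : t ≤ k) {g : G}
    (hg : g ∈ prefixSpan A t) :
    ∃ m : Fin k → ℕ, (∀ i, m i < L i) ∧ (∀ i : Fin k, t ≤ i → m i = 0) ∧
      g = ∑ i, m i • A i := by
  induction t generalizing g with
  | zero =>
    refine ⟨0, fun i => (hL i).1, fun _ _ => rfl, ?_⟩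
    simpa [prefixSpan] using hg
  | succ t ih =>
    set j : Fin k := ⟨t, ht⟩
    rw [prefixSpan_succ A ht, AddSubgroup.mem_sup] at hg
    obtain ⟨h, hh, y, hy, rfl⟩ := hg
    obtain ⟨z, rfl⟩ := mem_zmultiples_iff.mp hy
    obtain ⟨hLj, hLjmem⟩ := hL j
    set r := (z % L j).toNat
    have hr : (r : ℤ) = z % L j := Int.toNat_of_nonneg (Int.emod_nonneg _ (by omega))
    have hrL : r < L j := by have := Int.emod_lt_of_pos z (by omega : (0 : ℤ) < L j); omega
    have hz : z • A j = (z / L j) • (L j • A j) + r • A j := by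
      simp only [← natCast_zsmul, hr, ← mul_zsmul, ← add_zsmul, Int.ediv_mul_add_emod]
    obtain ⟨m, hmL, hm0, hm⟩ := ih (by omega) (add_mem hh (zsmul_mem hLjmem (z / L j)))
    refine ⟨m + Pi.single j r, fun i => ?_, fun i hi => ?_, ?_⟩
    · rcases eq_or_ne i j with rfl | hij
      · simpa [hm0 j le_rfl] using hrL
      · simpa [hij] using hmL i
    · have hij : i ≠ j := fun hij => by simp [hij, j] at hi
      simp [hm0 i (by omega), hij]
    · rw [hz, ← add_assoc, hm]
      simp only [Pi.add_apply, add_nsmul, sum_add_distrib]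
      simp [Pi.single_apply]

lemma sub_nsmul_mem_prefixSpan {m m' : Fin k → ℕ} (h : ∑ i, m i • A i = ∑ i, m' i • A i)
    {s : Fin k} (hs : ∀ i, s < i → m i = m' i) (hle : m' s ≤ m s) :
    (m s - m' s) • A s ∈ prefixSpan A s := by
  set f : Fin k → G := fun i => ((m i : ℤ) - m' i) • A i
  have hsum : ∑ i, f i = 0 := by
    simp only [f, sub_zsmul, natCast_zsmul, ← sub_eq_add_neg, sum_sub_distrib, h, sub_self]
  have hsplit : ∑ i, f i = f s + ∑ i ∈ Iio s, f i := by
    rw [← sum_subset (subset_univ (Iic s)) fun i _ hi => ?_, ← Iio_insert,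
      sum_insert notMem_Iio_self]
    simp [f, hs i (by simpa using hi)]
  have hfs : (m s - m' s) • A s = -∑ i ∈ Iio s, f i := by
    rw [← natCast_zsmul, Nat.cast_sub hle, eq_neg_iff_add_eq_zero, ← hsplit, hsum]
  rw [hfs]
  exact neg_mem <| sum_mem fun i hi =>
    zsmul_mem (subset_closure (Set.mem_image_of_mem A (by simpa using hi))) _

lemma eq_of_bounded_sum_nsmul_eq
    (hL : ∀ s : Fin k, ∀ t, 0 < t → t • A s ∈ prefixSpan A s → L s ≤ t)
    {m m' : Fin k → ℕ} (hm : ∀ i, m i < L i) (hm' : ∀ i, m' i < L i)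
    (h : ∑ i, m i • A i = ∑ i, m' i • A i) : m = m' := by
  by_contra hne
  obtain ⟨s, hs, hmax⟩ := (univ.filter fun i => m i ≠ m' i).exists_max_image id
    (by simpa [filter_nonempty_iff, funext_iff] using hne)
  have hgt : ∀ i, s < i → m i = m' i := fun i hi => by
    by_contra hi'
    exact (hmax i (by simpa using hi')).not_gt hi
  simp only [mem_filter, mem_univ, true_and] at hs
  rcases le_total (m' s) (m s) with hle | hle
  · have := hL s _ (by omega) (sub_nsmul_mem_prefixSpan A h hgt hle)
    have := hm s
    omega
  · have := hL s _ (by omega)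
      (sub_nsmul_mem_prefixSpan A h.symm (fun i hi => (hgt i hi).symm) hle)
    have := hm' s
    omega

theorem existsUnique_bounded_sum_nsmul
    (hL : ∀ s : Fin k, IsLeast {t | 0 < t ∧ t • A s ∈ prefixSpan A s} (L s)) {g : G}
    (hg : g ∈ closure (Set.range A)) :
    ∃! m : Fin k → ℕ, (∀ i, m i < L i) ∧ g = ∑ i, m i • A i := by
  obtain ⟨m, hmL, -, hm⟩ := exists_bounded_sum_nsmul_of_mem_prefixSpan A L (fun s => (hL s).1)
    le_rfl (prefixSpan_self A ▸ hg)
  refine ⟨m, ⟨hmL, hm⟩, fun m' ⟨hm'L, hm'⟩ => ?_⟩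
  exact eq_of_bounded_sum_nsmul_eq A L (fun s t ht hts => (hL s).2 ⟨ht, hts⟩) hm'L hmL
    (hm' ▸ hm)

end PrefixSpan

lemma natCast_gcd_mem {R : Type*} [Ring R] {H : AddSubgroup R} {x y : ℕ} (hx : (x : R) ∈ H)
    (hy : (y : R) ∈ H) : (x.gcd y : R) ∈ H := by
  have hbezout : (x.gcd y : R) = x.gcdA y • (x : R) + x.gcdB y • (y : R) := by
    rw [← Int.cast_natCast, Nat.gcd_eq_gcd_ab, zsmul_eq_mul, zsmul_eq_mul]
    push_cast
    rw [Int.cast_comm, Int.cast_comm (x.gcdB y)]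
  rw [hbezout]
  exact add_mem (zsmul_mem hx _) (zsmul_mem hy _)

lemma natCast_finset_gcd_mem {R ι : Type*} [Ring R] {H : AddSubgroup R} {s : Finset ι}
    {f : ι → ℕ} (hf : ∀ i ∈ s, (f i : R) ∈ H) : ((s.gcd f : ℕ) : R) ∈ H := by
  classical
  induction s using Finset.induction with
  | empty => simp [H.zero_mem]
  | insert i s _ ih =>
    rw [gcd_insert]
    exact natCast_gcd_mem (hf i (mem_insert_self i s)) (ih fun j hj => hf j (mem_insert_of_mem hj))

theorem circulant_unique_decomposition_general (n k : ℕ) (hn : 0 < n)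
    (a : Fin k → ℕ)
    (d : ℕ) (hd : d = Nat.gcd n (Finset.univ.gcd a))
    (L : Fin k → ℕ)
    (hL : ∀ s : Fin k, L s = sInf {t : ℕ | 0 < t ∧
      t • (((a s : ℕ) : ZMod n)) ∈
        AddSubgroup.closure ((fun i : Fin k => ((a i : ℕ) : ZMod n)) '' {i | i < s})}) :
    ∀ x : ZMod n, ∃! p : ℕ × (Fin k → ℕ),
      p.1 = x.val % d ∧ (∀ s, p.2 s < L s) ∧
      x = (p.1 : ZMod n) + ∑ s : Fin k, (p.2 s : ZMod n) * ((a s : ℕ) : ZMod n) := by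
  intro x
  have : NeZero n := ⟨hn.ne'⟩
  set A : Fin k → ZMod n := fun i => (a i : ZMod n)
  have hLA (s : Fin k) : IsLeast {t | 0 < t ∧ t • A s ∈ prefixSpan A s} (L s) :=
    hL s ▸ isLeast_csInf ⟨n, hn, by simp [zero_mem]⟩
  have hdA : (d : ZMod n) ∈ AddSubgroup.closure (Set.range A) :=
    hd ▸ natCast_gcd_mem (by simp [zero_mem])
      (natCast_finset_gcd_mem fun i _ => AddSubgroup.subset_closure (Set.mem_range_self i))
  obtain ⟨m, ⟨hmL, hm⟩, hm_unique⟩ :=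
    existsUnique_bounded_sum_nsmul A L hLA (nsmul_mem hdA (x.val / d))
  have hsum (c : Fin k → ℕ) : ∑ s, (c s : ZMod n) * A s = ∑ s, c s • A s := by
    simp only [nsmul_eq_mul]
  have hx : x = (x.val % d : ℕ) + ∑ s, m s • A s := by
    rw [← hm, nsmul_eq_mul, ← Nat.cast_mul, ← Nat.cast_add, Nat.mod_add_div', ZMod.natCast_zmod_val]
  refine ⟨(x.val % d, m), ⟨rfl, hmL, by rwa [hsum]⟩, ?_⟩
  rintro ⟨r, m'⟩ ⟨rfl, hm'L, hx'⟩
  rw [hsum] at hx'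
  exact Prod.ext rfl (hm_unique m' ⟨hm'L, hm.trans (add_left_cancel (hx.symm.trans hx'))⟩)

/-- decomposition lemma: with `d = gcd(n, a_1, …, a_k)`,
`G_s = ⟨a_1, …, a_{s-1}⟩ ≤ ZMod n` and `L_s = min {t > 0 : t·a_s ∈ G_s}`
(so `L_1` is the order of `a_1` in `ZMod n`), every `x ∈ ZMod n` is uniquely
`x = r + m_1 a_1 + ⋯ + m_k a_k` with `r = x mod d` (`0 ≤ r < d`) and
`0 ≤ m_s < L_s` for all `s`. -/
theorem circulant_unique_decomposition (n k : ℕ) (hn : 0 < n)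
    (a : Fin k → ℕ) (hpos : ∀ i, 0 < a i) (hlt : ∀ i, a i < n) (hmono : StrictMono a)
    (d : ℕ) (hd : d = Nat.gcd n (Finset.univ.gcd a))
    (L : Fin k → ℕ)
    (hL : ∀ s : Fin k, L s = sInf {t : ℕ | 0 < t ∧
      t • (((a s : ℕ) : ZMod n)) ∈
        AddSubgroup.closure ((fun i : Fin k => ((a i : ℕ) : ZMod n)) '' {i | i < s})}) :
    ∀ x : ZMod n, ∃! p : ℕ × (Fin k → ℕ),
      p.1 = x.val % d ∧ (∀ s, p.2 s < L s) ∧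
      x = (p.1 : ZMod n) + ∑ s : Fin k, (p.2 s : ZMod n) * ((a s : ℕ) : ZMod n) :=
  circulant_unique_decomposition_general n k hn a d hd L hL
end

section
/- Let n = 2^r·l, a_1 = 2^{r_1}·l_1, a_2 = 2^{r_2}·l_2 with l, l_1, l_2 odd and 0 < r_2 < r_1 < r, and let a_3 be odd with a_i ≠ ±2a_{i+1} mod n for i = 1,2. Then the circulant graph C_n(a_1, a_2, a_3) is triangle-free, i.e., no a_i ≡ ±a_j ± a_l (mod n) holds nontrivially. -/
/-!
A triangle `x, y, z` gives three jumps `x - y, y - z, z - x` in `±{a₁, a₂, a₃}` summing to `0`,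
i.e. `c₁ a₁ + c₂ a₂ + c₃ a₃ ≡ 0 (mod n)` with `|c₁| + |c₂| + |c₃| ≤ 3` and `c₁ + c₂ + c₃` odd.
In every case but two, the valuations `v₂(a₃) = 0 < r₂ < r₁ < r` make this sum `2^k · odd` plus a
multiple of `2^(k+1)` for some `k ≤ r₁`, so it cannot vanish mod `n`; the two remaining cases,
`±a₁ ± 2a₂` and `±a₂ ± 2a₃`, are the excluded congruences.
-/

/-- The circulant graph `C_n(a_1, …, a_k)` on `ZMod n`. -/
def circulant (n : ℕ) {k : ℕ} (a : Fin k → ℕ) : SimpleGraph (ZMod n) :=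
  SimpleGraph.circulantGraph (Set.range fun i => ((a i : ℕ) : ZMod n))

theorem SimpleGraph.circulantGraph_cliqueFree_three {G : Type*} [AddGroup G] {s : Set G}
    (h : ∀ x ∈ s ∪ -s, ∀ y ∈ s ∪ -s, ∀ z ∈ s ∪ -s, x + y + z ≠ 0) :
    (circulantGraph s).CliqueFree 3 := by
  have sub_mem : ∀ {u v}, (circulantGraph s).Adj u v → u - v ∈ s ∪ -s := by
    intro u v huv
    rcases ((circulantGraph_adj s u v).mp huv).2 with h | h
    · exact Or.inl h
    · exact Or.inr (by rwa [Set.mem_neg, neg_sub])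
  intro t ht
  classical
  obtain ⟨u, v, w, huv, huw, hvw, -⟩ := is3Clique_iff.mp ht
  exact h _ (sub_mem huv) _ (sub_mem hvw) _ (sub_mem huw.symm) (by simp)

theorem exists_coeffs_of_mem_range_union_neg {ι M : Type*} [Fintype ι] [DecidableEq ι]
    [AddCommGroup M] {v : ι → M} {x : M} (hx : x ∈ Set.range v ∪ -Set.range v) :
    ∃ c : ι → ℤ, ∑ i, |c i| = 1 ∧ Odd (∑ i, c i) ∧ x = ∑ i, c i • v i := by
  obtain ⟨i, ε, hε, rfl⟩ : ∃ i, ∃ ε : ℤ, (ε = 1 ∨ ε = -1) ∧ x = ε • v i := by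
    rcases hx with ⟨i, rfl⟩ | ⟨i, hi⟩
    · exact ⟨i, 1, Or.inl rfl, (one_smul ℤ _).symm⟩
    · exact ⟨i, -1, Or.inr rfl, by rw [neg_one_smul, hi, neg_neg]⟩
  refine ⟨Pi.single i ε, ?_, ?_, ?_⟩
  · simp only [Pi.single_apply, apply_ite, abs_zero, Finset.sum_ite_eq', Finset.mem_univ, if_true]
    rcases hε with rfl | rfl <;> rfl
  · simp only [Pi.single_apply, Finset.sum_ite_eq', Finset.mem_univ, if_true]
    rcases hε with rfl | rfl <;> decide
  · simp [Pi.single_apply, ite_smul]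

theorem exists_coeffs_of_add_add_mem {ι M : Type*} [Fintype ι] [DecidableEq ι]
    [AddCommGroup M] {v : ι → M} {x y z : M} (hx : x ∈ Set.range v ∪ -Set.range v)
    (hy : y ∈ Set.range v ∪ -Set.range v) (hz : z ∈ Set.range v ∪ -Set.range v) :
    ∃ c : ι → ℤ, ∑ i, |c i| ≤ 3 ∧ Odd (∑ i, c i) ∧ x + y + z = ∑ i, c i • v i := by
  obtain ⟨c₁, h₁, odd₁, rfl⟩ := exists_coeffs_of_mem_range_union_neg hx
  obtain ⟨c₂, h₂, odd₂, rfl⟩ := exists_coeffs_of_mem_range_union_neg hy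
  obtain ⟨c₃, h₃, odd₃, rfl⟩ := exists_coeffs_of_mem_range_union_neg hz
  refine ⟨c₁ + c₂ + c₃, ?_, ?_, ?_⟩
  · calc ∑ i, |(c₁ + c₂ + c₃) i| ≤ ∑ i, (|c₁ i| + |c₂ i| + |c₃ i|) :=
          Finset.sum_le_sum fun i _ => abs_add_three _ _ _
      _ = 3 := by simp only [Finset.sum_add_distrib, h₁, h₂, h₃]; norm_num
  · simpa only [Pi.add_apply, Finset.sum_add_distrib] using (odd₁.add_odd odd₂).add_odd odd₃
  · simp only [Pi.add_apply, add_smul, Finset.sum_add_distrib]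

theorem intCast_two_pow_mul_add_ne_zero {n k : ℕ} (hn : 2 ^ (k + 1) ∣ n) {m b : ℤ}
    (hm : Odd m) (hb : 2 ^ (k + 1) ∣ b) : ((2 ^ k * m + b : ℤ) : ZMod n) ≠ 0 := by
  rw [Ne, ZMod.intCast_zmod_eq_zero_iff_dvd]
  refine fun h => Int.not_even_iff_odd.mpr hm (even_iff_two_dvd.mpr ?_)
  have h' : (2 : ℤ) ^ (k + 1) ∣ 2 ^ k * m + b :=
    (by exact_mod_cast hn : ((2 ^ (k + 1) : ℕ) : ℤ) ∣ n).trans h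
  rwa [dvd_add_left hb, pow_succ, mul_dvd_mul_iff_left (pow_ne_zero k two_ne_zero)] at h'

theorem mul_add_mul_ne_zero_of_ne_two_mul {R : Type*} [CommRing R] {x y : R}
    (hne : x ≠ 2 * y ∧ x ≠ -(2 * y)) {ε δ : ℤ} (hε : |ε| = 1) (hδ : |δ| = 2) :
    ε * x + δ * y ≠ 0 := by
  intro h
  rcases abs_eq (zero_le_one' ℤ) |>.mp hε with rfl | rfl <;>
    rcases abs_eq zero_le_two |>.mp hδ with rfl | rfl <;> push_cast at h
  exacts [hne.2 (by linear_combination h), hne.1 (by linear_combination h),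
    hne.1 (by linear_combination -h), hne.2 (by linear_combination -h)]

theorem two_adic_lincomb_ne_zero {n a₁ a₂ a₃ r₁ r₂ l₁ l₂ : ℕ} (hn : 2 ^ (r₁ + 1) ∣ n)
    (ha₁ : a₁ = 2 ^ r₁ * l₁) (ha₂ : a₂ = 2 ^ r₂ * l₂) (hl₁ : Odd l₁) (hl₂ : Odd l₂)
    (ha₃ : Odd a₃) (hr₂ : 0 < r₂) (hr₁₂ : r₂ < r₁)
    (hne₁ : (a₁ : ZMod n) ≠ 2 * a₂ ∧ (a₁ : ZMod n) ≠ -(2 * a₂))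
    (hne₂ : (a₂ : ZMod n) ≠ 2 * a₃ ∧ (a₂ : ZMod n) ≠ -(2 * a₃))
    {c₁ c₂ c₃ : ℤ} (hc : |c₁| + |c₂| + |c₃| ≤ 3) (hodd : Odd (c₁ + c₂ + c₃)) :
    (c₁ * a₁ + c₂ * a₂ + c₃ * a₃ : ZMod n) ≠ 0 := by
  intro h
  have not_two_adic : ∀ k ≤ r₁, ∀ m b : ℤ, Odd m → 2 ^ (k + 1) ∣ b →
      c₁ * a₁ + c₂ * a₂ + c₃ * a₃ ≠ 2 ^ k * m + b := by
    intro k hk m b hm hb heq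
    refine intCast_two_pow_mul_add_ne_zero ((pow_dvd_pow 2 (by omega)).trans hn) hm hb ?_
    rw [← heq]
    push_cast
    exact h
  have ha₁' : (a₁ : ℤ) = 2 ^ r₁ * l₁ := by rw [ha₁]; push_cast; ring
  have ha₂' : (a₂ : ℤ) = 2 ^ r₂ * l₂ := by rw [ha₂]; push_cast; ring
  have dvd_a₁ : ∀ k ≤ r₁, (2 : ℤ) ^ k ∣ a₁ := fun k hk => ha₁' ▸ (pow_dvd_pow 2 hk).mul_right _
  rw [Int.odd_iff] at hodd
  have abs₁ := abs_cases c₁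
  have abs₂ := abs_cases c₂
  have abs₃ := abs_cases c₃
  rcases Int.even_or_odd c₃ with ⟨d₃, rfl⟩ | hc₃
  · rcases eq_or_ne d₃ 0 with rfl | hd₃
    · rcases Int.even_or_odd c₂ with ⟨d₂, rfl⟩ | hc₂
      · rcases eq_or_ne d₂ 0 with rfl | hd₂
        · exact not_two_adic r₁ le_rfl (c₁ * l₁) 0
            ((Int.odd_iff.mpr (by omega)).mul (Int.odd_coe_nat _ |>.mpr hl₁)) (dvd_zero _)
            (by rw [ha₁']; ring)
        · exact mul_add_mul_ne_zero_of_ne_two_mul hne₁ (ε := c₁) (δ := d₂ + d₂)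
            (by omega) (by omega) (by simpa using h)
      · exact not_two_adic r₂ hr₁₂.le (c₂ * l₂) (c₁ * a₁)
          (hc₂.mul (Int.odd_coe_nat _ |>.mpr hl₂)) ((dvd_a₁ _ hr₁₂).mul_left _)
          (by rw [ha₂']; ring)
    · rcases (by omega : c₁ = 0 ∧ |c₂| = 1 ∨ c₂ = 0 ∧ |c₁| = 1) with ⟨rfl, hc₂⟩ | ⟨rfl, -⟩
      · exact mul_add_mul_ne_zero_of_ne_two_mul hne₂ (δ := d₃ + d₃) hc₂ (by omega)
          (by simpa using h)
      · exact not_two_adic 1 (by omega) (d₃ * a₃) (c₁ * a₁)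
          ((Int.odd_iff.mpr (by omega)).mul (Int.odd_coe_nat _ |>.mpr ha₃))
          ((dvd_a₁ _ (by omega)).mul_left _) (by ring)
  · exact not_two_adic 0 (Nat.zero_le _) (c₃ * a₃) (c₁ * a₁ + c₂ * a₂)
      (hc₃.mul (Int.odd_coe_nat _ |>.mpr ha₃))
      (dvd_add ((dvd_a₁ _ (by omega)).mul_left _)
        ((ha₂' ▸ (pow_dvd_pow 2 hr₂).mul_right _ : (2 : ℤ) ^ 1 ∣ a₂).mul_left _)) (by ring)

theorem circulant_2adic_triangle_free_general (n a₁ a₂ a₃ r r₁ r₂ l l₁ l₂ : ℕ)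
    (hn : n = 2 ^ r * l) (ha₁ : a₁ = 2 ^ r₁ * l₁) (ha₂ : a₂ = 2 ^ r₂ * l₂)
    (hl₁ : Odd l₁) (hl₂ : Odd l₂) (hodd₃ : Odd a₃)
    (hr₂ : 0 < r₂) (hr₁₂ : r₂ < r₁) (hr : r₁ < r)
    (hne₁ : ((a₁ : ZMod n) ≠ 2 * (a₂ : ZMod n)) ∧ ((a₁ : ZMod n) ≠ -(2 * (a₂ : ZMod n))))
    (hne₂ : ((a₂ : ZMod n) ≠ 2 * (a₃ : ZMod n)) ∧ ((a₂ : ZMod n) ≠ -(2 * (a₃ : ZMod n)))) :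
    (circulant n ![a₁, a₂, a₃]).CliqueFree 3 := by
  have hn' : 2 ^ (r₁ + 1) ∣ n := hn ▸ (pow_dvd_pow 2 hr).mul_right l
  refine SimpleGraph.circulantGraph_cliqueFree_three fun x hx y hy z hz => ?_
  obtain ⟨c, hc, hodd, hsum⟩ := exists_coeffs_of_add_add_mem hx hy hz
  simp only [Fin.sum_univ_three] at hc hodd hsum
  rw [hsum]
  simpa [zsmul_eq_mul] using
    two_adic_lincomb_ne_zero hn' ha₁ ha₂ hl₁ hl₂ hodd₃ hr₂ hr₁₂ hne₁ hne₂ hc hodd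

/-- let `n = 2^r·l`, `a₁ = 2^{r₁}·l₁`, `a₂ = 2^{r₂}·l₂` with
`l, l₁, l₂` odd, `0 < r₂ < r₁ < r`, `a₃` odd, and `aᵢ ≢ ±2·a_{i+1} (mod n)` for
`i = 1, 2`.  Then the circulant graph `C_n(a₁, a₂, a₃)` is triangle-free. -/
theorem circulant_2adic_triangle_free (n a₁ a₂ a₃ r r₁ r₂ l l₁ l₂ : ℕ)
    (hn : n = 2 ^ r * l) (ha₁ : a₁ = 2 ^ r₁ * l₁) (ha₂ : a₂ = 2 ^ r₂ * l₂)
    (hl : Odd l) (hl₁ : Odd l₁) (hl₂ : Odd l₂) (hodd₃ : Odd a₃)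
    (hr₂ : 0 < r₂) (hr₁₂ : r₂ < r₁) (hr : r₁ < r)
    (hne₁ : ((a₁ : ZMod n) ≠ 2 * (a₂ : ZMod n)) ∧ ((a₁ : ZMod n) ≠ -(2 * (a₂ : ZMod n))))
    (hne₂ : ((a₂ : ZMod n) ≠ 2 * (a₃ : ZMod n)) ∧ ((a₂ : ZMod n) ≠ -(2 * (a₃ : ZMod n)))) :
    (circulant n ![a₁, a₂, a₃]).CliqueFree 3 :=
  circulant_2adic_triangle_free_general n a₁ a₂ a₃ r r₁ r₂ l l₁ l₂ hn ha₁ ha₂ hl₁ hl₂ hodd₃ hr₂ hr₁₂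
    hr hne₁ hne₂
end
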